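/- arXiv:1002.2452 — 5 statements merged into one kernel-verified Lean document; each statement's English description precedes it below -/
import Mathlib

section
/- Let m ≥ 1 and k ∈ ℕ, let P : ℝ^m → ℝ_{0,m} be a left monogenic function that is homogeneous of degree k (P(tx) = t^k P(x) for all t ∈ ℝ, x ∈ ℝ^m), and let B : (0,∞) → ℝ be continuously differentiable. Then for all x ∈ ℝ^m with x ≠ 0, writing r = |x|, one has ∂_x(B(r) ι(x) P(x)) = −((2k + m)B(r) + r B′(r)) P(x). -/
noncomputable section

open scoped BigOperators

/-- The `ℓ¹`-norm with respect to a Hamel basis.  On a finite-dimensional real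
vector space (such as the Clifford algebra `ℝ_{0,m}`) the induced topology is
the canonical one. -/
def hamelNorm (V : Type) [AddCommGroup V] [Module ℝ V] : AddGroupNorm V where
  toFun v := ∑ i ∈ ((Module.Basis.ofVectorSpace ℝ V).repr v).support,
      |(Module.Basis.ofVectorSpace ℝ V).repr v i|
  map_zero' := by simp
  add_le' := by
    intro x y
    classical
    set b := Module.Basis.ofVectorSpace ℝ V
    have hrepr : b.repr (x + y) = b.repr x + b.repr y := map_add _ _ _
    calc ∑ i ∈ (b.repr (x + y)).support, |b.repr (x + y) i|
        ≤ ∑ i ∈ (b.repr x).support ∪ (b.repr y).support, |b.repr (x + y) i| := by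
          refine Finset.sum_le_sum_of_subset_of_nonneg ?_ (fun i _ _ => abs_nonneg _)
          rw [hrepr]; exact Finsupp.support_add
      _ ≤ ∑ i ∈ (b.repr x).support ∪ (b.repr y).support, (|b.repr x i| + |b.repr y i|) := by
          refine Finset.sum_le_sum fun i _ => ?_
          rw [hrepr, Finsupp.add_apply]; exact abs_add_le _ _
      _ = (∑ i ∈ (b.repr x).support ∪ (b.repr y).support, |b.repr x i|)
            + ∑ i ∈ (b.repr x).support ∪ (b.repr y).support, |b.repr y i| :=
          Finset.sum_add_distrib
      _ = (∑ i ∈ (b.repr x).support, |b.repr x i|)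
            + ∑ i ∈ (b.repr y).support, |b.repr y i| := by
          rw [← Finset.sum_subset Finset.subset_union_left
              (fun i _ hi => by simp [Finsupp.notMem_support_iff.mp hi]),
            ← Finset.sum_subset Finset.subset_union_right
              (fun i _ hi => by simp [Finsupp.notMem_support_iff.mp hi])]
  neg' := by
    intro x
    simp [map_neg]
  eq_zero_of_map_eq_zero' := by
    classical
    intro x hx
    set b := Module.Basis.ofVectorSpace ℝ V
    have h0 : b.repr x = 0 := by
      ext i
      by_cases hi : i ∈ (b.repr x).support
      · exact abs_eq_zero.mp
          ((Finset.sum_eq_zero_iff_of_nonneg (fun i _ => abs_nonneg _)).mp hx i hi)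
      · simpa using Finsupp.notMem_support_iff.mp hi
    exact b.repr.map_eq_zero_iff.mp h0

/-- The quadratic form `Q(v) = -‖v‖²` on `ℝ^m`. -/
def Qneg (m : ℕ) : QuadraticForm ℝ (EuclideanSpace ℝ (Fin m)) :=
  (QuadraticMap.weightedSumSquares ℝ fun _ : Fin m => (-1 : ℝ)).comp
    (WithLp.linearEquiv 2 ℝ (Fin m → ℝ)).toLinearMap

/-- The real Clifford algebra `ℝ_{0,m}`. -/
abbrev Cl (m : ℕ) := CliffordAlgebra (Qneg m)

/-- The canonical embedding `ι : ℝ^m → ℝ_{0,m}`. -/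
abbrev ιC (m : ℕ) : EuclideanSpace ℝ (Fin m) →ₗ[ℝ] Cl m := CliffordAlgebra.ι (Qneg m)

/-- The generators `e₁, …, e_m` of `ℝ_{0,m}`. -/
def eC (m : ℕ) (j : Fin m) : Cl m := ιC m (EuclideanSpace.single j 1)

noncomputable instance (m : ℕ) : NormedAddCommGroup (Cl m) :=
  (hamelNorm (Cl m)).toNormedAddCommGroup

noncomputable instance (m : ℕ) : NormedSpace ℝ (Cl m) where
  norm_smul_le a v := by
    classical
    have hv : ‖v‖ = ∑ i ∈ ((Module.Basis.ofVectorSpace ℝ (Cl m)).repr v).support,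
        |(Module.Basis.ofVectorSpace ℝ (Cl m)).repr v i| := rfl
    have hav : ‖a • v‖ = ∑ i ∈ ((Module.Basis.ofVectorSpace ℝ (Cl m)).repr (a • v)).support,
        |(Module.Basis.ofVectorSpace ℝ (Cl m)).repr (a • v) i| := rfl
    set b := Module.Basis.ofVectorSpace ℝ (Cl m)
    have hrepr : b.repr (a • v) = a • b.repr v := map_smul _ _ _
    rw [hav, hv, Real.norm_eq_abs]
    calc ∑ i ∈ (b.repr (a • v)).support, |b.repr (a • v) i|
        ≤ ∑ i ∈ (b.repr v).support, |b.repr (a • v) i| := by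
          refine Finset.sum_le_sum_of_subset_of_nonneg ?_ (fun i _ _ => abs_nonneg _)
          rw [hrepr]; exact Finsupp.support_smul
      _ = ∑ i ∈ (b.repr v).support, |a| * |b.repr v i| := by
          refine Finset.sum_congr rfl fun i _ => ?_
          rw [hrepr, Finsupp.smul_apply, smul_eq_mul, abs_mul]
      _ = |a| * ∑ i ∈ (b.repr v).support, |b.repr v i| := by rw [Finset.mul_sum]

/-- The Dirac operator acting from the left: `∂_x f = Σⱼ eⱼ (∂_{xⱼ} f)`. -/
def diracL (m : ℕ) (f : EuclideanSpace ℝ (Fin m) → Cl m) (x : EuclideanSpace ℝ (Fin m)) : Cl m :=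
  ∑ j, eC m j * fderiv ℝ f x (EuclideanSpace.single j 1)

/-- The Dirac operator acting from the right: `f ∂_x = Σⱼ (∂_{xⱼ} f) eⱼ`. -/
def diracR (m : ℕ) (f : EuclideanSpace ℝ (Fin m) → Cl m) (x : EuclideanSpace ℝ (Fin m)) : Cl m :=
  ∑ j, fderiv ℝ f x (EuclideanSpace.single j 1) * eC m j

/-! Write `r = ‖x‖`. The Leibniz rule for the Dirac operator gives
`∂(B(r) x P) = B(r) ∂(x P) + ∇(B(r)) x P` with `∇(B(r)) = (B'(r) / r) x`. The anticommutation
relation `e_j x = -x e_j - 2 x_j` turns `∂(x P)` into `-m P - x ∂P - 2 Σ_j x_j ∂_j P`; here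
`∂P = 0` by monogenicity and `Σ_j x_j ∂_j P = k P` by Euler's identity for homogeneous
functions. Finally `x² = -r²`. -/

instance CliffordAlgebra.instFiniteDimensional {K E : Type*} [Field K] [Invertible (2 : K)]
    [AddCommGroup E] [Module K E] [FiniteDimensional K E] (Q : QuadraticForm K E) :
    FiniteDimensional K (CliffordAlgebra Q) :=
  have : FiniteDimensional K (ExteriorAlgebra K E) :=
    Module.Finite.of_basis (Module.finBasis K E).ExteriorAlgebra
  Module.Finite.equiv (CliffordAlgebra.equivExterior Q).symm

section Calculus

variable {E : Type*} [NormedAddCommGroup E] [InnerProductSpace ℝ E]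

theorem hasFDerivAt_norm {x : E} (hx : x ≠ 0) :
    HasFDerivAt (fun y : E => ‖y‖) (‖x‖⁻¹ • innerSL ℝ x) x := by
  have h := (hasStrictFDerivAt_norm_sq x).hasFDerivAt.sqrt (by positivity)
  simp only [Real.sqrt_sq (norm_nonneg _)] at h
  convert h using 1
  ext v
  simp only [smul_apply, coe_innerSL_apply, smul_eq_mul, nsmul_eq_mul, Nat.cast_ofNat]
  field_simp

theorem HasDerivAt.hasGradientAt_comp_norm [CompleteSpace E] {B : ℝ → ℝ} {b' : ℝ} {x : E}
    (hB : HasDerivAt B b' ‖x‖) (hx : x ≠ 0) :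
    HasGradientAt (fun y => B ‖y‖) ((b' / ‖x‖) • x) x := by
  rw [hasGradientAt_iff_hasFDerivAt]
  refine (hB.comp_hasFDerivAt x (hasFDerivAt_norm hx)).congr_fderiv ?_
  ext v
  simp only [smul_apply, coe_innerSL_apply, smul_eq_mul, map_smul,
    InnerProductSpace.toDual_apply_apply]
  ring

theorem fderiv_apply_self_eq_smul_of_homogeneous {F : Type*} [NormedAddCommGroup F]
    [NormedSpace ℝ F] {P : E → F} {k : ℕ} {x : E} (hP : DifferentiableAt ℝ P x)
    (hhom : ∀ t : ℝ, P (t • x) = t ^ k • P x) :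
    fderiv ℝ P x x = (k : ℝ) • P x := by
  have hray : HasDerivAt (fun t : ℝ => P (t • x)) (fderiv ℝ P x x) 1 := by
    have hP1 : HasFDerivAt P (fderiv ℝ P x) ((1 : ℝ) • x) := by
      rw [one_smul]; exact hP.hasFDerivAt
    have h := hP1.comp_hasDerivAt (1 : ℝ) ((hasDerivAt_id' (1 : ℝ)).smul_const x)
    rwa [one_smul] at h
  have hpow : HasDerivAt (fun t : ℝ => t ^ k • P x) ((k : ℝ) • P x) 1 := by
    simpa using (hasDerivAt_pow k (1 : ℝ)).smul_const (P x)
  exact hray.unique (by simpa only [hhom] using hpow)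

end Calculus

theorem Qneg_apply (m : ℕ) (v : EuclideanSpace ℝ (Fin m)) : Qneg m v = -‖v‖ ^ 2 := by
  rw [EuclideanSpace.real_norm_sq_eq]
  simp [Qneg, QuadraticMap.weightedSumSquares_apply, WithLp.linearEquiv, sq]

theorem polar_Qneg (m : ℕ) (u v : EuclideanSpace ℝ (Fin m)) :
    QuadraticMap.polar (Qneg m) u v = -2 * inner ℝ u v := by
  simp only [QuadraticMap.polar, Qneg_apply, norm_add_sq_real]
  ring

theorem ιC_mul_self (m : ℕ) (v : EuclideanSpace ℝ (Fin m)) :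
    ιC m v * ιC m v = algebraMap ℝ (Cl m) (-‖v‖ ^ 2) := by
  rw [CliffordAlgebra.ι_sq_scalar, Qneg_apply]

@[simp] theorem ιC_single_one (m : ℕ) (j : Fin m) : ιC m (EuclideanSpace.single j 1) = eC m j :=
  rfl

theorem eC_mul_self (m : ℕ) (j : Fin m) : eC m j * eC m j = -1 := by
  rw [eC, ιC_mul_self, PiLp.norm_single]
  simp

theorem eC_mul_ιC (m : ℕ) (j : Fin m) (v : EuclideanSpace ℝ (Fin m)) :
    eC m j * ιC m v = algebraMap ℝ (Cl m) (-2 * v j) - ιC m v * eC m j := by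
  rw [eC, CliffordAlgebra.ι_mul_ι_comm, polar_Qneg, EuclideanSpace.inner_single_left]
  simp

theorem LinearMap.sum_smul_apply_single {𝕜 ι M : Type*} [RCLike 𝕜] [Fintype ι] [DecidableEq ι]
    [AddCommGroup M] [Module 𝕜 M] (L : EuclideanSpace 𝕜 ι →ₗ[𝕜] M) (v : EuclideanSpace 𝕜 ι) :
    ∑ j, v j • L (EuclideanSpace.single j 1) = L v := by
  conv_rhs => rw [← (EuclideanSpace.basisFun ι 𝕜).sum_repr v]
  simp

theorem sum_smul_eC (m : ℕ) (v : EuclideanSpace ℝ (Fin m)) : ∑ j, v j • eC m j = ιC m v :=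
  (ιC m).sum_smul_apply_single v

def mulCLM (m : ℕ) : Cl m →L[ℝ] Cl m →L[ℝ] Cl m :=
  (LinearMap.mul ℝ (Cl m)).toContinuousBilinearMap

section Dirac

variable {m : ℕ} {F : EuclideanSpace ℝ (Fin m) → Cl m} {x : EuclideanSpace ℝ (Fin m)}

theorem HasFDerivAt.ιC_mul {F' : EuclideanSpace ℝ (Fin m) →L[ℝ] Cl m}
    (hF : HasFDerivAt F F' x) :
    HasFDerivAt (fun y => ιC m y * F y)
      ((mulCLM m (ιC m x)).comp F' + ((mulCLM m).flip (F x)).comp (ιC m).toContinuousLinearMap)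
      x := by
  refine ((mulCLM m).hasFDerivAt_of_bilinear (ιC m).toContinuousLinearMap.hasFDerivAt hF
    ).congr_fderiv ?_
  ext v
  simp

theorem diracL_smul {g : EuclideanSpace ℝ (Fin m) → ℝ} {g' : EuclideanSpace ℝ (Fin m)}
    (hg : HasGradientAt g g' x) (hF : DifferentiableAt ℝ F x) :
    diracL m (fun y => g y • F y) x = g x • diracL m F x + ιC m g' * F x := by
  have hgF : HasFDerivAt (fun y => g y • F y) _ x := hg.hasFDerivAt.smul hF.hasFDerivAt
  rw [diracL, diracL, hgF.fderiv, ← sum_smul_eC, Finset.sum_mul,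
    Finset.smul_sum, ← Finset.sum_add_distrib]
  refine Finset.sum_congr rfl fun j _ => ?_
  simp [InnerProductSpace.toDual_apply_apply, EuclideanSpace.inner_single_right, mul_add]

theorem diracL_ιC_mul (hF : DifferentiableAt ℝ F x) :
    diracL m (fun y => ιC m y * F y) x
      = -(m : ℝ) • F x - ιC m x * diracL m F x - (2 : ℝ) • fderiv ℝ F x x := by
  have hterm : ∀ j, eC m j * fderiv ℝ (fun y => ιC m y * F y) x (EuclideanSpace.single j 1)
      = (-2 * x j) • fderiv ℝ F x (EuclideanSpace.single j 1)
        - ιC m x * (eC m j * fderiv ℝ F x (EuclideanSpace.single j 1)) - F x := by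
    intro j
    rw [hF.hasFDerivAt.ιC_mul.fderiv]
    simp only [mulCLM, add_apply, ContinuousLinearMap.comp_apply, ContinuousLinearMap.flip_apply,
      LinearMap.toContinuousBilinearMap_apply, LinearMap.mul_apply_apply,
      LinearMap.coe_toContinuousLinearMap', ιC_single_one]
    rw [mul_add, ← mul_assoc, eC_mul_ιC, ← mul_assoc, eC_mul_self, sub_mul, mul_assoc,
      Algebra.algebraMap_eq_smul_one, smul_mul_assoc, one_mul, neg_one_mul]
    module
  have hEuler : ∑ j, (-2 * x j) • fderiv ℝ F x (EuclideanSpace.single j 1)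
      = (-2 : ℝ) • fderiv ℝ F x x := by
    simp only [mul_smul, ← Finset.smul_sum]
    exact congrArg _ ((fderiv ℝ F x).toLinearMap.sum_smul_apply_single x)
  simp only [diracL, hterm, Finset.sum_sub_distrib, hEuler, ← Finset.mul_sum, Finset.sum_const,
    Finset.card_univ, Fintype.card_fin, ← Nat.cast_smul_eq_nsmul ℝ]
  module

end Dirac

theorem dirac_B_smul_xP_general (m k : ℕ) (P : EuclideanSpace ℝ (Fin m) → Cl m)
    (hP : ContDiff ℝ 1 P) (hPmono : ∀ x, diracL m P x = 0)
    (hPhom : ∀ (t : ℝ) (x : EuclideanSpace ℝ (Fin m)), P (t • x) = t ^ k • P x)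
    (B : ℝ → ℝ) (hB : ContDiffOn ℝ 1 B (Set.Ioi 0))
    (x : EuclideanSpace ℝ (Fin m)) (hx : x ≠ 0) :
    diracL m (fun y => B ‖y‖ • (ιC m y * P y)) x
      = (-((2 * (k : ℝ) + (m : ℝ)) * B ‖x‖ + ‖x‖ * deriv B ‖x‖)) • P x := by
  have hPx : DifferentiableAt ℝ P x := hP.differentiable one_ne_zero x
  have hBx : HasDerivAt B (deriv B ‖x‖) ‖x‖ :=
    ((hB.differentiableOn one_ne_zero).differentiableAt
      (Ioi_mem_nhds (norm_pos_iff.mpr hx))).hasDerivAt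
  rw [diracL_smul (hBx.hasGradientAt_comp_norm hx) hPx.hasFDerivAt.ιC_mul.differentiableAt,
    diracL_ιC_mul hPx, hPmono, fderiv_apply_self_eq_smul_of_homogeneous hPx (fun t => hPhom t x),
    map_smul, smul_mul_assoc, ← mul_assoc, ιC_mul_self, Algebra.algebraMap_eq_smul_one,
    smul_mul_assoc, one_mul, mul_zero]
  have hr : ‖x‖ ≠ 0 := norm_ne_zero_iff.mpr hx
  match_scalars
  field_simp
  ring

/-- `∂_x(B(r) ι(x) P(x)) = -((2k + m)B(r) + r B′(r)) P(x)` for a left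
monogenic `P` homogeneous of degree `k`. -/
theorem dirac_B_smul_xP (m k : ℕ) (hm : 1 ≤ m) (P : EuclideanSpace ℝ (Fin m) → Cl m)
    (hP : ContDiff ℝ 1 P) (hPmono : ∀ x, diracL m P x = 0)
    (hPhom : ∀ (t : ℝ) (x : EuclideanSpace ℝ (Fin m)), P (t • x) = t ^ k • P x)
    (B : ℝ → ℝ) (hB : ContDiffOn ℝ 1 B (Set.Ioi 0))
    (x : EuclideanSpace ℝ (Fin m)) (hx : x ≠ 0) :
    diracL m (fun y => B ‖y‖ • (ιC m y * P y)) x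
      = (-((2 * (k : ℝ) + (m : ℝ)) * B ‖x‖ + ‖x‖ * deriv B ‖x‖)) • P x :=
  dirac_B_smul_xP_general m k P hP hPmono hPhom B hB x hx

end
end

section
/- Let k, l, m ∈ ℕ with m ≥ 1, and let A, B, C, D be ℝ-valued continuously differentiable functions on a connected open set Ξ ⊂ ℝ²_+ = {(x_1,x_2) : x_2 > 0} satisfying simultaneously the left system ∂_{x_0}A − r∂_r B = (2k+m)B + (−1)^{l+1}(2l−m)C; ∂_{x_0}B + (1/r)∂_r A = (−1)^l(2l−m)D; ∂_{x_0}C − r∂_r D = (2k+m+2)D; ∂_{x_0}D + (1/r)∂_r C = 0, and the right system ∂_{x_0}A − r∂_r C = (2k+m)C + (−1)^{l+1}(2l−m)B; ∂_{x_0}C + (1/r)∂_r A = (−1)^l(2l−m)D; ∂_{x_0}B − r∂_r D = (2k+m+2)D; ∂_{x_0}D + (1/r)∂_r B = 0. Then ∂_{x_0}(B − C) = 0 and ∂_r(B − C) = 0 on Ξ, so B − C is constant on Ξ; if moreover 2k + m + (−1)^l(2l − m) ≠ 0, then B = C on Ξ. -/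
noncomputable section

open scoped BigOperators

/-!
Comparing the last two equations of the left and right systems gives `∂_{x₀}B = ∂_{x₀}C` and,
since `r ≠ 0`, `∂_r B = ∂_r C`; so `B - C` has zero derivative and is constant on the connected
set `Ξ`. Comparing the first equations then gives
`(2k + m + (-1)^l (2l - m)) (B - C) = r ∂_r (C - B) = 0`.
-/

/-- The left Vekua-type system at `p = (x₀, r)`; the right one is `VekuaSystem k l m A C B D p`. -/
def VekuaSystem (k l m : ℕ) (A B C D : ℝ × ℝ → ℝ) (p : ℝ × ℝ) : Prop :=
  fderiv ℝ A p (1, 0) - p.2 * fderiv ℝ B p (0, 1)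
      = (2 * (k : ℝ) + (m : ℝ)) * B p
        + (-1 : ℝ) ^ (l + 1) * (2 * (l : ℝ) - (m : ℝ)) * C p
    ∧ fderiv ℝ B p (1, 0) + (1 / p.2) * fderiv ℝ A p (0, 1)
      = (-1 : ℝ) ^ l * (2 * (l : ℝ) - (m : ℝ)) * D p
    ∧ fderiv ℝ C p (1, 0) - p.2 * fderiv ℝ D p (0, 1)
      = (2 * (k : ℝ) + (m : ℝ) + 2) * D p
    ∧ fderiv ℝ D p (1, 0) + (1 / p.2) * fderiv ℝ C p (0, 1) = 0

namespace VekuaSystem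

variable {k l m : ℕ} {A B C D : ℝ × ℝ → ℝ} {p : ℝ × ℝ}

theorem fderiv_apply_one_zero_eq (hL : VekuaSystem k l m A B C D p)
    (hR : VekuaSystem k l m A C B D p) : fderiv ℝ B p (1, 0) = fderiv ℝ C p (1, 0) := by
  linarith [hL.2.2.1, hR.2.2.1]

theorem fderiv_apply_zero_one_eq (hL : VekuaSystem k l m A B C D p)
    (hR : VekuaSystem k l m A C B D p) (hr : p.2 ≠ 0) :
    fderiv ℝ B p (0, 1) = fderiv ℝ C p (0, 1) := by
  have h : (1 / p.2) * fderiv ℝ B p (0, 1) = (1 / p.2) * fderiv ℝ C p (0, 1) := by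
    linarith [hL.2.2.2, hR.2.2.2]
  exact mul_left_cancel₀ (one_div_ne_zero hr) h

theorem fderiv_eq (hL : VekuaSystem k l m A B C D p) (hR : VekuaSystem k l m A C B D p)
    (hr : p.2 ≠ 0) : fderiv ℝ B p = fderiv ℝ C p :=
  ContinuousLinearMap.prod_ext
    (ContinuousLinearMap.ext_ring (fderiv_apply_one_zero_eq hL hR))
    (ContinuousLinearMap.ext_ring (fderiv_apply_zero_one_eq hL hR hr))

theorem mul_sub_eq_zero (hL : VekuaSystem k l m A B C D p) (hR : VekuaSystem k l m A C B D p)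
    (hr : p.2 ≠ 0) :
    (2 * (k : ℝ) + (m : ℝ) + (-1 : ℝ) ^ l * (2 * (l : ℝ) - (m : ℝ))) * (B p - C p) = 0 := by
  linear_combination hR.1 - hL.1 - p.2 * fderiv_apply_zero_one_eq hL hR hr

end VekuaSystem

theorem B_eq_C_general (k l m : ℕ)
    (Ξ : Set (ℝ × ℝ)) (hΞo : IsOpen Ξ) (hΞconn : IsConnected Ξ)
    (hΞ : Ξ ⊆ {p : ℝ × ℝ | 0 < p.2})
    (A B C D : ℝ × ℝ → ℝ) (hB : ContDiffOn ℝ 1 B Ξ)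
    (hC : ContDiffOn ℝ 1 C Ξ)
    (hsysL : ∀ p ∈ Ξ,
      fderiv ℝ A p (1, 0) - p.2 * fderiv ℝ B p (0, 1)
          = (2 * (k : ℝ) + (m : ℝ)) * B p
            + (-1 : ℝ) ^ (l + 1) * (2 * (l : ℝ) - (m : ℝ)) * C p
        ∧ fderiv ℝ B p (1, 0) + (1 / p.2) * fderiv ℝ A p (0, 1)
          = (-1 : ℝ) ^ l * (2 * (l : ℝ) - (m : ℝ)) * D p
        ∧ fderiv ℝ C p (1, 0) - p.2 * fderiv ℝ D p (0, 1)
          = (2 * (k : ℝ) + (m : ℝ) + 2) * D p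
        ∧ fderiv ℝ D p (1, 0) + (1 / p.2) * fderiv ℝ C p (0, 1) = 0)
    (hsysR : ∀ p ∈ Ξ,
      fderiv ℝ A p (1, 0) - p.2 * fderiv ℝ C p (0, 1)
          = (2 * (k : ℝ) + (m : ℝ)) * C p
            + (-1 : ℝ) ^ (l + 1) * (2 * (l : ℝ) - (m : ℝ)) * B p
        ∧ fderiv ℝ C p (1, 0) + (1 / p.2) * fderiv ℝ A p (0, 1)
          = (-1 : ℝ) ^ l * (2 * (l : ℝ) - (m : ℝ)) * D p
        ∧ fderiv ℝ B p (1, 0) - p.2 * fderiv ℝ D p (0, 1)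
          = (2 * (k : ℝ) + (m : ℝ) + 2) * D p
        ∧ fderiv ℝ D p (1, 0) + (1 / p.2) * fderiv ℝ B p (0, 1) = 0) :
    (∀ p ∈ Ξ, fderiv ℝ (fun q => B q - C q) p (1, 0) = 0
        ∧ fderiv ℝ (fun q => B q - C q) p (0, 1) = 0)
      ∧ (∃ c : ℝ, ∀ p ∈ Ξ, B p - C p = c)
      ∧ ((2 * (k : ℝ) + (m : ℝ) + (-1 : ℝ) ^ l * (2 * (l : ℝ) - (m : ℝ)) ≠ 0) →
          ∀ p ∈ Ξ, B p = C p) := by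
  have hBd := hB.differentiableOn one_ne_zero
  have hCd := hC.differentiableOn one_ne_zero
  have hderiv : ∀ p ∈ Ξ, fderiv ℝ B p = fderiv ℝ C p := fun p hp =>
    VekuaSystem.fderiv_eq (hsysL p hp) (hsysR p hp) (hΞ hp).ne'
  have hderiv_sub : ∀ p ∈ Ξ, fderiv ℝ (fun q => B q - C q) p = 0 := fun p hp => by
    rw [fderiv_fun_sub (hBd.differentiableAt (hΞo.mem_nhds hp))
      (hCd.differentiableAt (hΞo.mem_nhds hp)), hderiv p hp, sub_self]
  obtain ⟨c, hc⟩ := hΞo.exists_eq_add_of_fderiv_eq hΞconn.isPreconnected hBd hCd hderiv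
  refine ⟨fun p hp => by simp [hderiv_sub p hp], ⟨c, fun p hp => by linarith [hc hp]⟩, ?_⟩
  intro hlam p hp
  have h := VekuaSystem.mul_sub_eq_zero (hsysL p hp) (hsysR p hp) (hΞ hp).ne'
  exact sub_eq_zero.mp ((mul_eq_zero.mp h).resolve_left hlam)

/-- If `A, B, C, D` satisfy simultaneously the left and right Vekua-type
systems on a connected open `Ξ ⊆ ℝ²₊`, then `∂_{x₀}(B - C) = ∂_r(B - C) = 0`, `B - C` is
constant on `Ξ`, and if `2k + m + (-1)^l(2l - m) ≠ 0` then `B = C` on `Ξ`. -/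
theorem B_eq_C (k l m : ℕ) (hm : 1 ≤ m)
    (Ξ : Set (ℝ × ℝ)) (hΞo : IsOpen Ξ) (hΞconn : IsConnected Ξ)
    (hΞ : Ξ ⊆ {p : ℝ × ℝ | 0 < p.2})
    (A B C D : ℝ × ℝ → ℝ) (hA : ContDiffOn ℝ 1 A Ξ) (hB : ContDiffOn ℝ 1 B Ξ)
    (hC : ContDiffOn ℝ 1 C Ξ) (hD : ContDiffOn ℝ 1 D Ξ)
    (hsysL : ∀ p ∈ Ξ,
      fderiv ℝ A p (1, 0) - p.2 * fderiv ℝ B p (0, 1)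
          = (2 * (k : ℝ) + (m : ℝ)) * B p
            + (-1 : ℝ) ^ (l + 1) * (2 * (l : ℝ) - (m : ℝ)) * C p
        ∧ fderiv ℝ B p (1, 0) + (1 / p.2) * fderiv ℝ A p (0, 1)
          = (-1 : ℝ) ^ l * (2 * (l : ℝ) - (m : ℝ)) * D p
        ∧ fderiv ℝ C p (1, 0) - p.2 * fderiv ℝ D p (0, 1)
          = (2 * (k : ℝ) + (m : ℝ) + 2) * D p
        ∧ fderiv ℝ D p (1, 0) + (1 / p.2) * fderiv ℝ C p (0, 1) = 0)
    (hsysR : ∀ p ∈ Ξ,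
      fderiv ℝ A p (1, 0) - p.2 * fderiv ℝ C p (0, 1)
          = (2 * (k : ℝ) + (m : ℝ)) * C p
            + (-1 : ℝ) ^ (l + 1) * (2 * (l : ℝ) - (m : ℝ)) * B p
        ∧ fderiv ℝ C p (1, 0) + (1 / p.2) * fderiv ℝ A p (0, 1)
          = (-1 : ℝ) ^ l * (2 * (l : ℝ) - (m : ℝ)) * D p
        ∧ fderiv ℝ B p (1, 0) - p.2 * fderiv ℝ D p (0, 1)
          = (2 * (k : ℝ) + (m : ℝ) + 2) * D p
        ∧ fderiv ℝ D p (1, 0) + (1 / p.2) * fderiv ℝ B p (0, 1) = 0) :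
    (∀ p ∈ Ξ, fderiv ℝ (fun q => B q - C q) p (1, 0) = 0
        ∧ fderiv ℝ (fun q => B q - C q) p (0, 1) = 0)
      ∧ (∃ c : ℝ, ∀ p ∈ Ξ, B p - C p = c)
      ∧ ((2 * (k : ℝ) + (m : ℝ) + (-1 : ℝ) ^ l * (2 * (l : ℝ) - (m : ℝ)) ≠ 0) →
          ∀ p ∈ Ξ, B p = C p) :=
  B_eq_C_general k l m Ξ hΞo hΞconn hΞ A B C D hB hC hsysL hsysR

end
end

section
/- Let k, m ∈ ℕ with m ≥ 1, and let a_2, a_3 : (0,∞) → ℝ with a_2 twice continuously differentiable and a_3 continuously differentiable. If a_2 − r a_3′ = (2k+m+2)a_3 and a_3 + a_2′/r = 0 on (0,∞), then a_2 satisfies the Bessel-type ordinary differential equation r a_2″ + (2k+m+1) a_2′ + r a_2 = 0 on (0,∞). -/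
noncomputable section

open scoped BigOperators

open Filter Topology in
theorem bessel_ode_of_radial_pair {a₂ a₃ : ℝ → ℝ} {c r : ℝ} (hr : r ≠ 0)
    (hd : DifferentiableAt ℝ (deriv a₂) r)
    (h3 : a₂ r - r * deriv a₃ r = (c + 1) * a₃ r)
    (h4 : ∀ᶠ x in 𝓝 r, a₃ x + deriv a₂ x / x = 0) :
    r * deriv (deriv a₂) r + c * deriv a₂ r + r * a₂ r = 0 := by
  have ha₃ : a₃ =ᶠ[𝓝 r] fun x => -deriv a₂ x / x :=
    h4.mono fun x hx => by simp only [neg_div]; linarith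
  have hderiv : HasDerivAt a₃ ((-deriv (deriv a₂) r * r - -deriv a₂ r * 1) / r ^ 2) r :=
    (hd.hasDerivAt.neg.div (hasDerivAt_id r) hr).congr_of_eventuallyEq ha₃
  rw [hderiv.deriv, ha₃.eq_of_nhds] at h3
  field_simp at h3
  linear_combination h3

theorem bessel_ode_of_system_general (k m : ℕ)
    (a₂ a₃ : ℝ → ℝ) (ha₂ : ContDiffOn ℝ 2 a₂ (Set.Ioi 0))
    (h3 : ∀ r ∈ Set.Ioi (0 : ℝ),
      a₂ r - r * deriv a₃ r = (2 * (k : ℝ) + (m : ℝ) + 2) * a₃ r)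
    (h4 : ∀ r ∈ Set.Ioi (0 : ℝ), a₃ r + deriv a₂ r / r = 0) :
    ∀ r ∈ Set.Ioi (0 : ℝ),
      r * deriv (deriv a₂) r + (2 * (k : ℝ) + (m : ℝ) + 1) * deriv a₂ r + r * a₂ r = 0 := by
  intro r hr
  have hd : DifferentiableAt ℝ (deriv a₂) r :=
    ((ha₂.deriv_of_isOpen isOpen_Ioi (by norm_num)).differentiableOn one_ne_zero r hr
      ).differentiableAt (isOpen_Ioi.mem_nhds hr)
  refine bessel_ode_of_radial_pair (ne_of_gt hr) hd ?_
    (Filter.eventually_of_mem (isOpen_Ioi.mem_nhds hr) h4)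
  rw [h3 r hr]
  ring

/-- The last two radial equations imply the Bessel-type ODE
`r a₂″ + (2k + m + 1) a₂′ + r a₂ = 0`. -/
theorem bessel_ode_of_system (k m : ℕ) (hm : 1 ≤ m)
    (a₂ a₃ : ℝ → ℝ) (ha₂ : ContDiffOn ℝ 2 a₂ (Set.Ioi 0))
    (ha₃ : ContDiffOn ℝ 1 a₃ (Set.Ioi 0))
    (h3 : ∀ r ∈ Set.Ioi (0 : ℝ),
      a₂ r - r * deriv a₃ r = (2 * (k : ℝ) + (m : ℝ) + 2) * a₃ r)
    (h4 : ∀ r ∈ Set.Ioi (0 : ℝ), a₃ r + deriv a₂ r / r = 0) :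
    ∀ r ∈ Set.Ioi (0 : ℝ),
      r * deriv (deriv a₂) r + (2 * (k : ℝ) + (m : ℝ) + 1) * deriv a₂ r + r * a₂ r = 0 :=
  bessel_ode_of_system_general k m a₂ a₃ ha₂ h3 h4

end
end

section
/- Let k, l, m ∈ ℕ with m ≥ 1, and let a_2 : (0,∞) → ℝ be twice continuously differentiable and satisfy r a_2″ + (2k+m+1) a_2′ + r a_2 = 0 on (0,∞). Define a_3(r) = −a_2′(r)/r and a_1(r) = ((2k+m) + (−1)^{l+1}(2l−m)) a_2(r) − r² a_3(r). Then the second equation of the radial system holds: a_2 + a_1′/r = (−1)^l(2l−m) a_3 on (0,∞). -/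
noncomputable section

open scoped BigOperators

theorem deriv_const_mul_add_mul_deriv_of_bessel {f : ℝ → ℝ} {r : ℝ} (n c : ℝ)
    (hf : DifferentiableAt ℝ f r) (hf' : DifferentiableAt ℝ (deriv f) r)
    (hode : r * deriv (deriv f) r + (n + 1) * deriv f r + r * f r = 0) :
    deriv (fun s => c * f s + s * deriv f s) r = (c - n) * deriv f r - r * f r := by
  have hder : HasDerivAt (fun s => c * f s + s * deriv f s)
      (c * deriv f r + (1 * deriv f r + r * deriv (deriv f) r)) r :=
    (hf.hasDerivAt.const_mul c).add ((hasDerivAt_id r).mul hf'.hasDerivAt)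
  rw [hder.deriv]
  linarith

theorem second_equation_of_bessel_general (k l m : ℕ)
    (a₂ : ℝ → ℝ) (ha₂ : ContDiffOn ℝ 2 a₂ (Set.Ioi 0))
    (hode : ∀ r ∈ Set.Ioi (0 : ℝ),
      r * deriv (deriv a₂) r + (2 * (k : ℝ) + (m : ℝ) + 1) * deriv a₂ r + r * a₂ r = 0)
    (a₃ : ℝ → ℝ) (ha₃ : a₃ = fun r => -(deriv a₂ r / r))
    (a₁ : ℝ → ℝ) (ha₁ : a₁ = fun r =>
      ((2 * (k : ℝ) + (m : ℝ)) + (-1 : ℝ) ^ (l + 1) * (2 * (l : ℝ) - (m : ℝ))) * a₂ r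
        - r ^ 2 * a₃ r) :
    ∀ r ∈ Set.Ioi (0 : ℝ),
      a₂ r + deriv a₁ r / r = (-1 : ℝ) ^ l * (2 * (l : ℝ) - (m : ℝ)) * a₃ r := by
  intro r hr
  set c := (2 * (k : ℝ) + (m : ℝ)) + (-1 : ℝ) ^ (l + 1) * (2 * (l : ℝ) - (m : ℝ))
  have hr₀ : r ≠ 0 := (Set.mem_Ioi.mp hr).ne'
  have ha₁_eq : a₁ =ᶠ[nhds r] fun s => c * a₂ s + s * deriv a₂ s := by
    filter_upwards [Ioi_mem_nhds hr] with s hs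
    rw [ha₁, ha₃]
    field_simp [(Set.mem_Ioi.mp hs).ne']
    ring
  have ha₂' : ContDiffOn ℝ 1 (deriv a₂) (Set.Ioi 0) :=
    ha₂.deriv_of_isOpen isOpen_Ioi (by norm_num)
  have hda₁ : deriv a₁ r = (c - (2 * k + m)) * deriv a₂ r - r * a₂ r := by
    rw [ha₁_eq.deriv_eq]
    exact deriv_const_mul_add_mul_deriv_of_bessel _ c
      ((ha₂.differentiableOn (by norm_num)).differentiableAt (Ioi_mem_nhds hr))
      ((ha₂'.differentiableOn one_ne_zero).differentiableAt (Ioi_mem_nhds hr))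
      (hode r hr)
  rw [hda₁, ha₃]
  simp only [c, pow_succ]
  field_simp
  ring

/-- If `a₂` solves the Bessel-type ODE, `a₃ := -a₂′/r` and
`a₁ := ((2k+m) + (-1)^{l+1}(2l-m)) a₂ - r² a₃`, then the second radial equation
`a₂ + a₁′/r = (-1)^l (2l - m) a₃` holds. -/
theorem second_equation_of_bessel (k l m : ℕ) (hm : 1 ≤ m)
    (a₂ : ℝ → ℝ) (ha₂ : ContDiffOn ℝ 2 a₂ (Set.Ioi 0))
    (hode : ∀ r ∈ Set.Ioi (0 : ℝ),
      r * deriv (deriv a₂) r + (2 * (k : ℝ) + (m : ℝ) + 1) * deriv a₂ r + r * a₂ r = 0)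
    (a₃ : ℝ → ℝ) (ha₃ : a₃ = fun r => -(deriv a₂ r / r))
    (a₁ : ℝ → ℝ) (ha₁ : a₁ = fun r =>
      ((2 * (k : ℝ) + (m : ℝ)) + (-1 : ℝ) ^ (l + 1) * (2 * (l : ℝ) - (m : ℝ))) * a₂ r
        - r ^ 2 * a₃ r) :
    ∀ r ∈ Set.Ioi (0 : ℝ),
      a₂ r + deriv a₁ r / r = (-1 : ℝ) ^ l * (2 * (l : ℝ) - (m : ℝ)) * a₃ r :=
  second_equation_of_bessel_general k l m a₂ ha₂ hode a₃ ha₃ a₁ ha₁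

end
end

section
/- Let k, l, m ∈ ℕ with m ≥ 1, and let A_1, A_2, A_3 : ℝ × (0,∞) → ℝ be smooth functions satisfying the system ∂_{x_0}A_1 − r∂_r A_2 = ((2k+m) + (−1)^{l+1}(2l−m))A_2; ∂_{x_0}A_2 + (1/r)∂_r A_1 = (−1)^l(2l−m)A_3; ∂_{x_0}A_2 − r∂_r A_3 = (2k+m+2)A_3; ∂_{x_0}A_3 + (1/r)∂_r A_2 = 0. Define A_{j,n}(r) = (∂_{x_0}^n A_j)(0, r) for j = 1,2,3 and n ∈ ℕ. Then for all n ≥ 1 the recurrence relations hold on (0,∞): A_{2,n+1} = −A_{2,n−1}″ − ((2k+m+1)/r) A_{2,n−1}′, A_{3,n+1} = −(1/r) A_{2,n}′, and A_{1,n+1} = r A_{2,n}′ + ((2k+m) + (−1)^{l+1}(2l−m)) A_{2,n}. -/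
noncomputable section

open scoped BigOperators

/-- The coefficient `A_{j,n}(r) = (∂_{x₀}ⁿ Aⱼ)(0, r)` of the power series method. -/
def x0Coef (A : ℝ × ℝ → ℝ) (n : ℕ) (r : ℝ) : ℝ :=
  deriv^[n] (fun t => A (t, r)) 0


namespace PSR

open Filter Set Topology
open scoped ContDiff

abbrev U : Set (ℝ × ℝ) := {p : ℝ × ℝ | 0 < p.2}

lemma hU : IsOpen U := isOpen_lt continuous_const continuous_snd

def D1 (A : ℝ × ℝ → ℝ) : ℝ × ℝ → ℝ := fun p => fderiv ℝ A p (1, 0)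
def D2 (A : ℝ × ℝ → ℝ) : ℝ × ℝ → ℝ := fun p => fderiv ℝ A p (0, 1)

variable {A : ℝ × ℝ → ℝ} {r : ℝ}

lemma smooth_D (hA : ContDiffOn ℝ (⊤ : ℕ∞) A U) (v : ℝ × ℝ) :
    ContDiffOn ℝ (⊤ : ℕ∞) (fun p => fderiv ℝ A p v) U :=
  (ContinuousLinearMap.apply ℝ ℝ v).contDiff.comp_contDiffOn
    (hA.fderiv_of_isOpen hU (by simp))

lemma lineSmooth (hA : ContDiffOn ℝ (⊤ : ℕ∞) A U) (hr : 0 < r) :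
    ContDiff ℝ ∞ (fun t => A (t, r)) := by
  have : ContDiff ℝ (⊤ : ℕ∞) (fun t : ℝ => A (t, r)) := by
    rw [← contDiffOn_univ]
    exact hA.comp ((contDiff_id.prodMk contDiff_const).contDiffOn)
      (fun t _ => show (0:ℝ) < r from hr)
  exact this.of_le (by simp)

lemma hasDerivAt_line (hA : ContDiffOn ℝ (⊤ : ℕ∞) A U) (hr : 0 < r) (t : ℝ) :
    HasDerivAt (fun s => A (s, r)) (fderiv ℝ A (t, r) (1, 0)) t := by
  have hd : DifferentiableAt ℝ A (t, r) :=
    (hA.contDiffAt (hU.mem_nhds hr)).differentiableAt (by simp)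
  exact hd.hasFDerivAt.comp_hasDerivAt t (HasDerivAt.prodMk (hasDerivAt_id t) (hasDerivAt_const t r))

lemma x0Coef_congr {f g : ℝ × ℝ → ℝ} (n : ℕ) (h : ∀ t, f (t, r) = g (t, r)) :
    x0Coef f n r = x0Coef g n r := by
  unfold x0Coef
  exact congrFun (congrArg _ (funext h)) 0

lemma x0Coef_succ (hA : ContDiffOn ℝ (⊤ : ℕ∞) A U) (hr : 0 < r) (n : ℕ) :
    x0Coef A (n + 1) r = x0Coef (D1 A) n r := by
  unfold x0Coef
  rw [Function.iterate_succ_apply]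
  refine congrFun (congrArg _ (funext fun t => ?_)) 0
  exact (hasDerivAt_line hA hr t).deriv

lemma schwarz (hA : ContDiffOn ℝ (⊤ : ℕ∞) A U) {p : ℝ × ℝ} (hp : p ∈ U) :
    D2 (D1 A) p = D1 (D2 A) p := by
  have hnhds : U ∈ 𝓝 p := hU.mem_nhds hp
  have hf' : ∀ᶠ y in 𝓝 p, HasFDerivAt A (fderiv ℝ A y) y := by
    filter_upwards [hnhds] with y hy
    exact ((hA.contDiffAt (hU.mem_nhds hy)).differentiableAt (by simp)).hasFDerivAt
  have hf'' : HasFDerivAt (fderiv ℝ A) (fderiv ℝ (fderiv ℝ A) p) p := by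
    have h2 : ContDiffOn ℝ (⊤ : ℕ∞) (fderiv ℝ A) U := hA.fderiv_of_isOpen hU (by simp)
    exact ((h2.contDiffAt hnhds).differentiableAt (by simp)).hasFDerivAt
  have key : ∀ v w : ℝ × ℝ,
      fderiv ℝ (fun q => fderiv ℝ A q v) p w = fderiv ℝ (fderiv ℝ A) p w v := by
    intro v w
    have h := ((ContinuousLinearMap.apply ℝ ℝ v).hasFDerivAt.comp p hf'').fderiv
    have : fderiv ℝ (fun q => fderiv ℝ A q v) p
        = (ContinuousLinearMap.apply ℝ ℝ v).comp (fderiv ℝ (fderiv ℝ A) p) := h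
    rw [this]
    rfl
  have hsym := second_derivative_symmetric_of_eventually hf' hf''
    ((1:ℝ), (0:ℝ)) ((0:ℝ), (1:ℝ))
  show fderiv ℝ (fun q => fderiv ℝ A q (1,0)) p (0,1)
      = fderiv ℝ (fun q => fderiv ℝ A q (0,1)) p (1,0)
  rw [key, key, hsym]

lemma hasDerivAt_x0Coef (n : ℕ) :
    ∀ (A : ℝ × ℝ → ℝ), ContDiffOn ℝ (⊤ : ℕ∞) A U → ∀ r : ℝ, 0 < r →
      HasDerivAt (x0Coef A n) (x0Coef (D2 A) n r) r := by
  induction n with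
  | zero =>
    intro A hA r hr
    have hd : DifferentiableAt ℝ A (0, r) :=
      (hA.contDiffAt (hU.mem_nhds hr)).differentiableAt (by simp)
    exact hd.hasFDerivAt.comp_hasDerivAt r (HasDerivAt.prodMk (hasDerivAt_const r (0:ℝ)) (hasDerivAt_id r))
  | succ n ih =>
    intro A hA r hr
    have hD1 : ContDiffOn ℝ (⊤ : ℕ∞) (D1 A) U := smooth_D hA (1, 0)
    have hD2 : ContDiffOn ℝ (⊤ : ℕ∞) (D2 A) U := smooth_D hA (0, 1)
    have h1 : HasDerivAt (x0Coef (D1 A) n) (x0Coef (D2 (D1 A)) n r) r := ih (D1 A) hD1 r hr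
    have heq : x0Coef A (n + 1) =ᶠ[𝓝 r] x0Coef (D1 A) n :=
      eventuallyEq_of_mem (isOpen_Ioi.mem_nhds hr) (fun s hs => x0Coef_succ hA hs n)
    have h2 : x0Coef (D2 (D1 A)) n r = x0Coef (D2 A) (n + 1) r := by
      rw [x0Coef_congr n (fun t => schwarz hA (show (0:ℝ) < r from hr)),
        ← x0Coef_succ hD2 hr n]
    exact h2 ▸ h1.congr_of_eventuallyEq heq

lemma iter_deriv_const_mul (c : ℝ) (f : ℝ → ℝ) (n : ℕ) :
    deriv^[n] (fun t => c * f t) = fun t => c * deriv^[n] f t := by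
  induction n with
  | zero => rfl
  | succ n ih =>
    funext x
    rw [Function.iterate_succ_apply', ih, Function.iterate_succ_apply',
      deriv_const_mul_field]

lemma iter_deriv_add {f g : ℝ → ℝ} (hf : ContDiff ℝ ∞ f) (hg : ContDiff ℝ ∞ g) (n : ℕ) :
    deriv^[n] (fun t => f t + g t) = fun t => deriv^[n] f t + deriv^[n] g t := by
  induction n generalizing f g with
  | zero => rfl
  | succ n ih =>
    have hd : deriv (fun t => f t + g t) = fun t => deriv f t + deriv g t := by
      funext x
      exact deriv_add ((hf.differentiable (by simp)) x)
        ((hg.differentiable (by simp)) x)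
    rw [Function.iterate_succ_apply, hd,
      ih (contDiff_infty_iff_deriv.mp hf).2 (contDiff_infty_iff_deriv.mp hg).2]
    funext x
    rw [Function.iterate_succ_apply, Function.iterate_succ_apply]

lemma iter_comb (a b : ℝ) {f g : ℝ → ℝ} (hf : ContDiff ℝ ∞ f) (hg : ContDiff ℝ ∞ g) (n : ℕ) :
    deriv^[n] (fun t => a * f t + b * g t) 0 = a * deriv^[n] f 0 + b * deriv^[n] g 0 := by
  rw [iter_deriv_add (contDiff_const.mul hf) (contDiff_const.mul hg) n]
  simp only [iter_deriv_const_mul]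

end PSR

/-- The power series coefficients of smooth solutions of the
Vekua-type system satisfy the stated recurrence relations for `n ≥ 1`. -/
theorem power_series_recurrences (k l m : ℕ) (hm : 1 ≤ m)
    (A₁ A₂ A₃ : ℝ × ℝ → ℝ)
    (hA₁ : ContDiffOn ℝ (⊤ : ℕ∞) A₁ {p : ℝ × ℝ | 0 < p.2})
    (hA₂ : ContDiffOn ℝ (⊤ : ℕ∞) A₂ {p : ℝ × ℝ | 0 < p.2})
    (hA₃ : ContDiffOn ℝ (⊤ : ℕ∞) A₃ {p : ℝ × ℝ | 0 < p.2})
    (hsys : ∀ p : ℝ × ℝ, 0 < p.2 →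
      fderiv ℝ A₁ p (1, 0) - p.2 * fderiv ℝ A₂ p (0, 1)
          = ((2 * (k : ℝ) + (m : ℝ))
              + (-1 : ℝ) ^ (l + 1) * (2 * (l : ℝ) - (m : ℝ))) * A₂ p
        ∧ fderiv ℝ A₂ p (1, 0) + (1 / p.2) * fderiv ℝ A₁ p (0, 1)
          = (-1 : ℝ) ^ l * (2 * (l : ℝ) - (m : ℝ)) * A₃ p
        ∧ fderiv ℝ A₂ p (1, 0) - p.2 * fderiv ℝ A₃ p (0, 1)
          = (2 * (k : ℝ) + (m : ℝ) + 2) * A₃ p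
        ∧ fderiv ℝ A₃ p (1, 0) + (1 / p.2) * fderiv ℝ A₂ p (0, 1) = 0) :
    ∀ n : ℕ, 1 ≤ n → ∀ r ∈ Set.Ioi (0 : ℝ),
      x0Coef A₂ (n + 1) r
          = -(deriv (deriv (x0Coef A₂ (n - 1))) r)
            - ((2 * (k : ℝ) + (m : ℝ) + 1) / r) * deriv (x0Coef A₂ (n - 1)) r
        ∧ x0Coef A₃ (n + 1) r = -(1 / r) * deriv (x0Coef A₂ n) r
        ∧ x0Coef A₁ (n + 1) r
          = r * deriv (x0Coef A₂ n) r
            + ((2 * (k : ℝ) + (m : ℝ))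
                + (-1 : ℝ) ^ (l + 1) * (2 * (l : ℝ) - (m : ℝ))) * x0Coef A₂ n r := by
  intro n hn r hr
  simp only [Set.mem_Ioi] at hr
  obtain ⟨n, rfl⟩ : ∃ j, n = j + 1 := ⟨n - 1, (Nat.succ_pred_eq_of_pos hn).symm⟩
  have hU2 : ContDiffOn ℝ (⊤ : ℕ∞) A₂ PSR.U := hA₂
  have hU1 : ContDiffOn ℝ (⊤ : ℕ∞) A₁ PSR.U := hA₁
  have hU3 : ContDiffOn ℝ (⊤ : ℕ∞) A₃ PSR.U := hA₃
  have hD2A₂ : ContDiffOn ℝ (⊤ : ℕ∞) (PSR.D2 A₂) PSR.U := PSR.smooth_D hU2 (0, 1)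
  have hD2A₃ : ContDiffOn ℝ (⊤ : ℕ∞) (PSR.D2 A₃) PSR.U := PSR.smooth_D hU3 (0, 1)
  have swap₂ : ∀ (j : ℕ) (s : ℝ), 0 < s →
      deriv (x0Coef A₂ j) s = x0Coef (PSR.D2 A₂) j s :=
    fun j s hs => (PSR.hasDerivAt_x0Coef j A₂ hU2 s hs).deriv
  have E4 : ∀ (j : ℕ) (s : ℝ), 0 < s →
      x0Coef A₃ (j + 1) s = -(1 / s) * x0Coef (PSR.D2 A₂) j s := by
    intro j s hs
    have h1 : x0Coef (PSR.D1 A₃) j s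
        = x0Coef (fun p => -(1 / s) * PSR.D2 A₂ p) j s := by
      refine PSR.x0Coef_congr j (fun t => ?_)
      have h := (hsys (t, s) hs).2.2.2
      show fderiv ℝ A₃ (t, s) (1, 0) = -(1 / s) * fderiv ℝ A₂ (t, s) (0, 1)
      linarith
    have h2 : x0Coef (fun p => -(1 / s) * PSR.D2 A₂ p) j s
        = -(1 / s) * x0Coef (PSR.D2 A₂) j s := by
      unfold x0Coef
      rw [PSR.iter_deriv_const_mul]
    rw [PSR.x0Coef_succ hU3 hs j, h1, h2]
  refine ⟨?_, ?_, ?_⟩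
  · -- the A₂ recurrence
    simp only [Nat.add_sub_cancel]
    set g : ℝ → ℝ := x0Coef (PSR.D2 A₂) n with hg
    set g' : ℝ → ℝ := x0Coef (PSR.D2 (PSR.D2 A₂)) n with hg'
    have hgd : HasDerivAt g (g' r) r := PSR.hasDerivAt_x0Coef n (PSR.D2 A₂) hD2A₂ r hr
    have s1 : x0Coef A₂ (n + 1 + 1) r
        = r * x0Coef (PSR.D2 A₃) (n + 1) r
          + (2 * (k : ℝ) + (m : ℝ) + 2) * x0Coef A₃ (n + 1) r := by
      have h1 : x0Coef (PSR.D1 A₂) (n + 1) r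
          = x0Coef (fun p => r * PSR.D2 A₃ p + (2 * (k : ℝ) + (m : ℝ) + 2) * A₃ p)
              (n + 1) r := by
        refine PSR.x0Coef_congr (n + 1) (fun t => ?_)
        have h := (hsys (t, r) hr).2.2.1
        show fderiv ℝ A₂ (t, r) (1, 0)
            = r * fderiv ℝ A₃ (t, r) (0, 1) + (2 * (k : ℝ) + (m : ℝ) + 2) * A₃ (t, r)
        linarith
      have h2 : x0Coef (fun p => r * PSR.D2 A₃ p + (2 * (k : ℝ) + (m : ℝ) + 2) * A₃ p)
            (n + 1) r
          = r * x0Coef (PSR.D2 A₃) (n + 1) r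
            + (2 * (k : ℝ) + (m : ℝ) + 2) * x0Coef A₃ (n + 1) r := by
        unfold x0Coef
        exact PSR.iter_comb r (2 * (k : ℝ) + (m : ℝ) + 2)
          (PSR.lineSmooth hD2A₃ hr) (PSR.lineSmooth hU3 hr) (n + 1)
      rw [PSR.x0Coef_succ hU2 hr (n + 1), h1, h2]
    have s2 : x0Coef (PSR.D2 A₃) (n + 1) r = deriv (x0Coef A₃ (n + 1)) r :=
      ((PSR.hasDerivAt_x0Coef (n + 1) A₃ hU3 r hr).deriv).symm
    have hA3eq : x0Coef A₃ (n + 1) =ᶠ[nhds r] fun s => -(1 / s) * g s :=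
      Filter.eventuallyEq_of_mem (isOpen_Ioi.mem_nhds hr) (fun s hs => E4 n s hs)
    have hprod : HasDerivAt (fun s => -(1 / s) * g s)
        ((r ^ 2)⁻¹ * g r + -(1 / r) * g' r) r := by
      have hinv : HasDerivAt (fun s : ℝ => -(1 / s)) ((r ^ 2)⁻¹) r := by
        have h := (hasDerivAt_inv (ne_of_gt hr)).neg
        rw [neg_neg] at h
        simp only [one_div]
        exact h
      exact hinv.mul hgd
    have s3 : deriv (x0Coef A₃ (n + 1)) r = (r ^ 2)⁻¹ * g r + -(1 / r) * g' r := by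
      rw [hA3eq.deriv_eq]
      exact hprod.deriv
    have s4 : deriv (x0Coef A₂ n) r = g r := swap₂ n r hr
    have s5 : deriv (deriv (x0Coef A₂ n)) r = g' r := by
      have he : deriv (x0Coef A₂ n) =ᶠ[nhds r] g :=
        Filter.eventuallyEq_of_mem (isOpen_Ioi.mem_nhds hr) (fun s hs => swap₂ n s hs)
      rw [he.deriv_eq]
      exact hgd.deriv
    rw [s1, s2, s3, E4 n r hr, s4, s5]
    have hrne : r ≠ 0 := ne_of_gt hr
    field_simp
    ring
  · -- the A₃ recurrence
    rw [E4 (n + 1) r hr, swap₂ (n + 1) r hr]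
  · -- the A₁ recurrence
    have h1 : x0Coef (PSR.D1 A₁) (n + 1) r
        = x0Coef (fun p => r * PSR.D2 A₂ p
            + ((2 * (k : ℝ) + (m : ℝ)) + (-1 : ℝ) ^ (l + 1) * (2 * (l : ℝ) - (m : ℝ))) * A₂ p)
            (n + 1) r := by
      refine PSR.x0Coef_congr (n + 1) (fun t => ?_)
      have h := (hsys (t, r) hr).1
      show fderiv ℝ A₁ (t, r) (1, 0)
          = r * fderiv ℝ A₂ (t, r) (0, 1)
            + ((2 * (k : ℝ) + (m : ℝ)) + (-1 : ℝ) ^ (l + 1) * (2 * (l : ℝ) - (m : ℝ)))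
              * A₂ (t, r)
      linarith
    have h2 : x0Coef (fun p => r * PSR.D2 A₂ p
          + ((2 * (k : ℝ) + (m : ℝ)) + (-1 : ℝ) ^ (l + 1) * (2 * (l : ℝ) - (m : ℝ))) * A₂ p)
          (n + 1) r
        = r * x0Coef (PSR.D2 A₂) (n + 1) r
          + ((2 * (k : ℝ) + (m : ℝ)) + (-1 : ℝ) ^ (l + 1) * (2 * (l : ℝ) - (m : ℝ)))
            * x0Coef A₂ (n + 1) r := by
      unfold x0Coef
      exact PSR.iter_comb r _ (PSR.lineSmooth hD2A₂ hr) (PSR.lineSmooth hU2 hr) (n + 1)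
    rw [PSR.x0Coef_succ hU1 hr (n + 1), h1, h2, swap₂ (n + 1) r hr]


end
end
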